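/- arXiv:math/0610096 — 2 statements merged into one kernel-verified Lean document; each statement's English description precedes it below -/
import Mathlib

section
/- For k ∈ ℝ \ {0}, define P_n(x,k) = p_n(tanh x, ik) by the recursion p_0 = 1 and p_n(tanh x, ik) = d/dx [ p_{n−1}(tanh x, ik) ] + (ik − n tanh x) p_{n−1}(tanh x, ik). Then the function e_n(x,k) = (sign k)^n (∏_{j=1}^n 1/(j + i|k|)) P_n(x,k) e^{ikx} satisfies the eigenvalue equation −e_n''(x,k) − n(n+1) sech²(x) e_n(x,k) = k² e_n(x,k) for all x ∈ ℝ. -/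
open Complex

/-- `PT k n x = P_n(x,k) = p_n(tanh x, ik)`, defined by the recursion
`p_0 = 1`, `p_n = d/dx p_{n−1} + (ik − n tanh x) p_{n−1}`. -/
noncomputable def PT (k : ℝ) : ℕ → ℝ → ℂ
  | 0 => fun _ => 1
  | (m + 1) => fun x =>
      deriv (PT k m) x + (Complex.I * (k : ℂ) - ((m : ℂ) + 1) * (Real.tanh x : ℂ)) * PT k m x

/-- The continuum eigenfunction
`e_n(x,k) = (sign k)^n (∏_{j=1}^n 1/(j + i|k|)) P_n(x,k) e^{ikx}`. -/
noncomputable def PTeigen (n : ℕ) (k : ℝ) (x : ℝ) : ℂ :=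
  ((Real.sign k : ℝ) : ℂ) ^ n *
    (∏ j ∈ Finset.range n, (1 : ℂ) / (((j : ℂ) + 1) + Complex.I * (|k| : ℝ))) *
    PT k n x * Complex.exp (Complex.I * (k : ℂ) * (x : ℂ))

/-!
Write `ψₙ(x) = Pₙ(x,k) e^{ikx}`. Since `(d/dx + ik)` conjugates to `d/dx` under `e^{ikx}`, the
recursion for `Pₙ` says `ψₙ₊₁ = (d/dx - (n+1) tanh x) ψₙ`, and `ψ₀ = e^{ikx}` solves
`-ψ'' = k² ψ`. The operator `d/dx - (a+1) tanh` is a Darboux ladder operator: it maps solutions of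
`-ψ'' - a(a+1) sech² ψ = K ψ` to solutions of `-ψ'' - (a+1)(a+2) sech² ψ = K ψ`, which follows from
`tanh' = sech²` and `(sech²)' = -2 sech² tanh`. Induction on `n` and linearity in the constant
prefactor give the theorem.
-/

open scoped ContDiff

lemma Real.hasDerivAt_tanh (x : ℝ) : HasDerivAt Real.tanh ((1 / Real.cosh x) ^ 2) x := by
  have hcosh : Real.cosh x ≠ 0 := (Real.cosh_pos x).ne'
  rw [show Real.tanh = fun y => Real.sinh y / Real.cosh y from funext Real.tanh_eq_sinh_div_cosh]
  refine ((Real.hasDerivAt_sinh x).div (Real.hasDerivAt_cosh x) hcosh).congr_deriv ?_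
  rw [← sq, ← sq, Real.cosh_sq_sub_sinh_sq, one_div_pow]

lemma Real.hasDerivAt_sech_sq (x : ℝ) :
    HasDerivAt (fun y => (1 / Real.cosh y) ^ 2) (-2 * (1 / Real.cosh x) ^ 2 * Real.tanh x) x := by
  have hcosh : Real.cosh x ≠ 0 := (Real.cosh_pos x).ne'
  simp only [one_div]
  refine ((Real.hasDerivAt_cosh x).fun_inv hcosh).fun_pow 2 |>.congr_deriv ?_
  rw [Real.tanh_eq_sinh_div_cosh]
  field_simp
  norm_num [hcosh, mul_comm]

lemma Real.contDiff_tanh {n : WithTop ℕ∞} : ContDiff ℝ n Real.tanh := by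
  rw [show Real.tanh = fun y => Real.sinh y / Real.cosh y from funext Real.tanh_eq_sinh_div_cosh]
  exact Real.contDiff_sinh.div Real.contDiff_cosh fun y => (Real.cosh_pos y).ne'

lemma hasDerivAt_ofReal_tanh (x : ℝ) :
    HasDerivAt (fun y : ℝ => (Real.tanh y : ℂ)) (((1 / Real.cosh x : ℝ) : ℂ) ^ 2) x := by
  simpa using (Real.hasDerivAt_tanh x).ofReal_comp

lemma hasDerivAt_ofReal_sech_sq (x : ℝ) :
    HasDerivAt (fun y : ℝ => ((1 / Real.cosh y : ℝ) : ℂ) ^ 2)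
      (-2 * ((1 / Real.cosh x : ℝ) : ℂ) ^ 2 * (Real.tanh x : ℂ)) x := by
  simpa using (Real.hasDerivAt_sech_sq x).ofReal_comp

theorem deriv_deriv_ladder {f : ℝ → ℂ} {K a : ℂ} (hf : Differentiable ℝ f)
    (hf' : Differentiable ℝ (deriv f))
    (hode : ∀ y, deriv (deriv f) y = -(K + a * (a + 1) * ((1 / Real.cosh y : ℝ) : ℂ) ^ 2) * f y)
    (x : ℝ) :
    deriv (deriv fun y => deriv f y - (a + 1) * Real.tanh y * f y) x =
      -(K + (a + 1) * (a + 2) * ((1 / Real.cosh x : ℝ) : ℂ) ^ 2) *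
        (deriv f x - (a + 1) * Real.tanh x * f x) := by
  have hderiv : deriv (fun y => deriv f y - (a + 1) * Real.tanh y * f y) = fun y =>
      -(K + (a + 1) ^ 2 * ((1 / Real.cosh y : ℝ) : ℂ) ^ 2) * f y
        - (a + 1) * Real.tanh y * deriv f y := by
    funext y
    rw [((hf' y).hasDerivAt.fun_sub
      (((hasDerivAt_ofReal_tanh y).const_mul (a + 1)).fun_mul (hf y).hasDerivAt)).deriv, hode]
    ring
  have hsecond :=
    (((hasDerivAt_ofReal_sech_sq x).const_mul ((a + 1) ^ 2)).const_add K).fun_neg.fun_mul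
      (hf x).hasDerivAt |>.fun_sub
        (((hasDerivAt_ofReal_tanh x).const_mul (a + 1)).fun_mul (hf' x).hasDerivAt)
  rw [hderiv, hsecond.deriv, hode]
  ring

lemma hasDerivAt_cexp_I_mul (k x : ℝ) :
    HasDerivAt (fun y : ℝ => cexp (I * k * y)) (I * k * cexp (I * k * x)) x := by
  simpa [mul_comm] using ((hasDerivAt_id x).ofReal_comp.const_mul (I * k)).cexp

lemma contDiff_PT (k : ℝ) (n : ℕ) : ContDiff ℝ ∞ (PT k n) := by
  induction n with
  | zero => exact contDiff_const
  | succ m ih =>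
    have htanh : ContDiff ℝ ∞ fun x => (Real.tanh x : ℂ) :=
      ofRealCLM.contDiff.comp Real.contDiff_tanh
    exact (contDiff_infty_iff_deriv.mp ih).2.add
      ((contDiff_const.sub (contDiff_const.mul htanh)).mul ih)

noncomputable def PTwave (k : ℝ) (n : ℕ) (x : ℝ) : ℂ := PT k n x * cexp (I * k * x)

lemma contDiff_PTwave (k : ℝ) (n : ℕ) : ContDiff ℝ ∞ (PTwave k n) :=
  (contDiff_PT k n).mul (contDiff_const.mul ofRealCLM.contDiff).cexp

lemma PTwave_zero (k : ℝ) : PTwave k 0 = fun x : ℝ => cexp (I * k * x) := by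
  funext x
  simp [PTwave, PT]

lemma PTwave_succ (k : ℝ) (n : ℕ) :
    PTwave k (n + 1) =
      fun x => deriv (PTwave k n) x - ((n : ℂ) + 1) * Real.tanh x * PTwave k n x := by
  funext x
  have hPT := ((contDiff_PT k n).differentiable (by simp) x).hasDerivAt
  have hwave : HasDerivAt (PTwave k n)
      (deriv (PT k n) x * cexp (I * k * x) + PT k n x * (I * k * cexp (I * k * x))) x :=
    hPT.fun_mul (hasDerivAt_cexp_I_mul k x)
  rw [hwave.deriv]
  simp only [PTwave, PT]
  ring

theorem deriv_deriv_PTwave (k : ℝ) (n : ℕ) (x : ℝ) :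
    deriv (deriv (PTwave k n)) x =
      -((k : ℂ) ^ 2 + (n : ℂ) * ((n : ℂ) + 1) * ((1 / Real.cosh x : ℝ) : ℂ) ^ 2) *
        PTwave k n x := by
  induction n generalizing x with
  | zero =>
    have hderiv : deriv (fun y : ℝ => cexp (I * k * y)) = fun y : ℝ => I * k * cexp (I * k * y) :=
      funext fun y => (hasDerivAt_cexp_I_mul k y).deriv
    rw [PTwave_zero, hderiv, ((hasDerivAt_cexp_I_mul k x).const_mul (I * k)).deriv]
    push_cast
    linear_combination (k : ℂ) ^ 2 * cexp (I * k * x) * I_sq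
  | succ n ih =>
    have hsmooth := contDiff_PTwave k n
    have hsmooth' := (contDiff_infty_iff_deriv.mp hsmooth).2
    rw [PTwave_succ, deriv_deriv_ladder (hsmooth.differentiable (by simp))
      (hsmooth'.differentiable (by simp)) ih]
    push_cast
    ring

theorem stmt6_general (n : ℕ) (k : ℝ) (x : ℝ) :
    -(deriv (deriv (PTeigen n k)) x) -
        ((n : ℂ) * ((n : ℂ) + 1)) * ((1 / Real.cosh x : ℝ) : ℂ) ^ 2 * PTeigen n k x =
      ((k : ℂ)) ^ 2 * PTeigen n k x := by
  set C : ℂ := ((Real.sign k : ℝ) : ℂ) ^ n *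
    ∏ j ∈ Finset.range n, (1 : ℂ) / (((j : ℂ) + 1) + I * (|k| : ℝ))
  have hPTeigen : PTeigen n k = fun y => C * PTwave k n y := by
    funext y
    simp only [PTeigen, PTwave, C]
    ring
  rw [hPTeigen, deriv_const_mul_field', deriv_const_mul_field']
  beta_reduce
  rw [deriv_deriv_PTwave]
  ring

/-- `e_n(·,k)` solves the eigenvalue equation
`−e_n'' − n(n+1) sech²(x) e_n = k² e_n` for the Pöschl–Teller potential. -/
theorem stmt6 (n : ℕ) (k : ℝ) (hk : k ≠ 0) (x : ℝ) :
    -(deriv (deriv (PTeigen n k)) x) -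
        ((n : ℂ) * ((n : ℂ) + 1)) * ((1 / Real.cosh x : ℝ) : ℂ) ^ 2 * PTeigen n k x =
      ((k : ℂ)) ^ 2 * PTeigen n k x :=
  stmt6_general n k x
end

section
/- Let (I_k) be a countable collection of pairwise disjoint cubes in ℝⁿ, α > 0, and (c_k) nonnegative reals with c_k ≤ α |I_k| for all k. Let μ be a finite positive measure, ρ ∈ L¹(ℝⁿ) nonnegative radially decreasing with ‖ρ‖₁ ≤ 1. Then for every h ∈ L²(ℝⁿ), ∑_k c_k |I_k|^{−1} ∫_{I_k} (ρ_{t_k} * μ * |h|)(z) dz ≤ α μ(ℝⁿ) (∑_k |I_k|)^{1/2} ‖Mh‖_{L²}, where t_k > 0 are arbitrary and M is the Hardy–Littlewood maximal operator. -/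
/-!
A radially decreasing kernel is a superposition (layer cake) of indicators of radial sets,
i.e. of balls up to null sets, so `∫ ρ_t(y) |h(w - y)| dy ≤ ‖ρ‖₁ Mh(w)`. Integrating against `μ`
bounds the `k`-th average by `α ∫ ∫_{I_k} Mh(z - u) dz dμ(u)`; summing over the disjoint cubes
and applying Cauchy–Schwarz on their union `U` gives `α μ(ℝⁿ) |U|^{1/2} ‖Mh‖₂`.
-/

open MeasureTheory Metric ENNReal

/-- An axis-parallel cube in `ℝⁿ` with corner `a` and side length `r`. -/
def cube {n : ℕ} (a : EuclideanSpace ℝ (Fin n)) (r : ℝ) : Set (EuclideanSpace ℝ (Fin n)) :=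
  {y | ∀ i, a i ≤ y i ∧ y i ≤ a i + r}

/-- The Hardy–Littlewood maximal function, with values in `ℝ≥0∞`. -/
noncomputable def maximalFn {n : ℕ} (h : EuclideanSpace ℝ (Fin n) → ℂ)
    (x : EuclideanSpace ℝ (Fin n)) : ℝ≥0∞ :=
  ⨆ (r : ℝ) (_ : 0 < r), (volume (ball x r))⁻¹ * ∫⁻ y in ball x r, ((‖h y‖₊ : ℝ≥0∞))

section General

variable {α : Type*} [MeasurableSpace α] {μ : Measure α}

theorem lintegral_ofReal_mul_le_of_superlevelSets [SFinite μ] {φ : α → ℝ} (hφ0 : 0 ≤ φ)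
    (hφ : AEMeasurable φ μ) {F : α → ℝ≥0∞} (hF : AEMeasurable F μ) {C : ℝ≥0∞}
    (hlevel : ∀ s, ∫⁻ y in {y | s < φ y}, F y ∂μ ≤ μ {y | s < φ y} * C) :
    ∫⁻ y, ENNReal.ofReal (φ y) * F y ∂μ ≤ (∫⁻ y, ENNReal.ofReal (φ y) ∂μ) * C := by
  -- the layer-cake formula for `μ.withDensity F`, compared with the one for `μ`
  set ν := μ.withDensity F
  have hφν : AEMeasurable φ ν := hφ.mono' (withDensity_absolutelyContinuous μ F)
  calc ∫⁻ y, ENNReal.ofReal (φ y) * F y ∂μ = ∫⁻ y, ENNReal.ofReal (φ y) ∂ν := by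
        rw [lintegral_withDensity_eq_lintegral_mul₀ hF hφ.ennreal_ofReal]
        simp_rw [Pi.mul_apply, mul_comm]
    _ = ∫⁻ s in Set.Ioi 0, ν {y | s < φ y} :=
        lintegral_eq_lintegral_meas_lt ν (ae_of_all _ hφ0) hφν
    _ ≤ ∫⁻ s in Set.Ioi 0, μ {y | s < φ y} * C :=
        lintegral_mono fun s => (withDensity_apply' F _).trans_le (hlevel s)
    _ = (∫⁻ s in Set.Ioi 0, μ {y | s < φ y}) * C :=
        lintegral_mul_const _ (Antitone.measurable fun s s' hss' =>
          measure_mono fun y hy => hss'.trans_lt hy)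
    _ = (∫⁻ y, ENNReal.ofReal (φ y) ∂μ) * C := by
        rw [lintegral_eq_lintegral_meas_lt μ (ae_of_all _ hφ0) hφ]

theorem setLIntegral_le_measure_rpow_mul_lintegral_sq (s : Set α) {f : α → ℝ≥0∞}
    (hf : AEMeasurable f μ) :
    ∫⁻ x in s, f x ∂μ ≤ μ s ^ (1 / 2 : ℝ) * (∫⁻ x, f x ^ 2 ∂μ) ^ (1 / 2 : ℝ) := by
  have hCS := ENNReal.lintegral_mul_le_Lp_mul_Lq (μ.restrict s) Real.HolderConjugate.two_two
    aemeasurable_const hf.restrict (f := fun _ => 1)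
  simp only [Pi.mul_apply, one_mul, one_pow, setLIntegral_const, ENNReal.rpow_two] at hCS
  exact hCS.trans (by gcongr; exact Measure.restrict_le_self)

end General

theorem ofReal_mul_inv_le_of_le_mul_toReal {c α : ℝ} {v : ℝ≥0∞} (hc : c ≤ α * v.toReal)
    (hv : v ≠ ⊤) : ENNReal.ofReal c * v⁻¹ ≤ ENNReal.ofReal α :=
  calc ENNReal.ofReal c * v⁻¹ ≤ ENNReal.ofReal (α * v.toReal) * v⁻¹ := by gcongr
    _ = ENNReal.ofReal α * (v * v⁻¹) := by
        rw [ofReal_mul' toReal_nonneg, ofReal_toReal hv, mul_assoc]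
    _ ≤ ENNReal.ofReal α := mul_le_of_le_one_right' (ENNReal.mul_inv_le_one v)

theorem lintegral_mul_lintegral_sub_sub_le {G : Type*} [AddCommGroup G] [MeasurableSpace G]
    [MeasurableAdd₂ G] [MeasurableNeg G] {ν : Measure G} [SFinite ν] [ν.IsAddLeftInvariant]
    (μ : Measure G) [SFinite μ] {ψ F M : G → ℝ≥0∞} (hψ : AEMeasurable ψ ν)
    (hF : AEMeasurable F ν) (hM : ∀ w, ∫⁻ y, ψ y * F (w - y) ∂ν ≤ M w) (z : G) :
    ∫⁻ y, ψ y * ∫⁻ u, F (z - y - u) ∂μ ∂ν ≤ ∫⁻ u, M (z - u) ∂μ := by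
  have hqmp : Measure.QuasiMeasurePreserving (fun p : G × G => z - p.1 - p.2) (ν.prod μ) ν := by
    refine QuasiMeasurePreserving.prod_of_left (by fun_prop) (ae_of_all _ fun u => ?_)
    simpa only [sub_right_comm] using quasiMeasurePreserving_sub_left ν (z - u)
  calc ∫⁻ y, ψ y * ∫⁻ u, F (z - y - u) ∂μ ∂ν ≤ ∫⁻ y, ∫⁻ u, ψ y * F (z - y - u) ∂μ ∂ν :=
        lintegral_mono fun y => lintegral_const_mul_le _ _
    _ = ∫⁻ u, ∫⁻ y, ψ y * F (z - y - u) ∂ν ∂μ :=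
        lintegral_lintegral_swap ((hψ.comp_quasiMeasurePreserving
          Measure.quasiMeasurePreserving_fst).mul (hF.comp_quasiMeasurePreserving hqmp))
    _ ≤ ∫⁻ u, M (z - u) ∂μ := lintegral_mono fun u => by
        simpa only [sub_right_comm z _ u] using hM (z - u)

theorem lowerSemicontinuous_setLIntegral_ball {X : Type*} [PseudoMetricSpace X]
    [MeasurableSpace X] [OpensMeasurableSpace X] (μ : Measure X) (f : X → ℝ≥0∞) (r : ℝ) :
    LowerSemicontinuous fun x => ∫⁻ y in ball x r, f y ∂μ := by
  intro x c (hc : c < ∫⁻ y in ball x r, f y ∂μ)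
  have hunion : ball x r = ⋃ k : ℕ, ball x (r - 1 / (k + 1)) := by
    ext y
    simp only [mem_ball, Set.mem_iUnion]
    refine ⟨fun hy => ?_, fun ⟨k, hk⟩ => hk.trans_le (sub_le_self _ Nat.one_div_pos_of_nat.le)⟩
    obtain ⟨k, hk⟩ := exists_nat_one_div_lt (sub_pos.2 hy)
    exact ⟨k, by linarith⟩
  have hmono : Monotone fun k : ℕ => ball x (r - 1 / (k + 1)) := fun k l hkl =>
    ball_subset_ball (by gcongr)
  rw [← withDensity_apply _ measurableSet_ball, hunion, hmono.measure_iUnion, lt_iSup_iff] at hc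
  obtain ⟨k, hk⟩ := hc
  rw [withDensity_apply _ measurableSet_ball] at hk
  filter_upwards [ball_mem_nhds x (Nat.one_div_pos_of_nat (n := k))] with x' hx'
  refine hk.trans_le (lintegral_mono_set (ball_subset_ball' ?_))
  rw [mem_ball, dist_comm] at hx'
  linarith

theorem eq_univ_or_ball_subset_subset_closedBall {E : Type*} [SeminormedAddCommGroup E]
    {A : Set E} (hA : ∀ y y', ‖y'‖ ≤ ‖y‖ → y ∈ A → y' ∈ A) :
    A = Set.univ ∨ ∃ R, ball 0 R ⊆ A ∧ A ⊆ closedBall 0 R := by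
  by_cases hbdd : BddAbove (norm '' A)
  · refine .inr ⟨sSup (norm '' A), fun y' hy' => ?_, fun y hy => ?_⟩
    · rw [mem_ball_zero_iff] at hy'
      rcases (norm '' A).eq_empty_or_nonempty with hempty | hne
      · rw [hempty, Real.sSup_empty] at hy'
        exact absurd hy' (norm_nonneg y').not_gt
      obtain ⟨_, ⟨y, hy, rfl⟩, hlt⟩ := exists_lt_of_lt_csSup hne hy'
      exact hA y y' hlt.le hy
    · exact mem_closedBall_zero_iff.2 (le_csSup hbdd ⟨y, hy, rfl⟩)
  · refine .inl (Set.eq_univ_of_forall fun y' => ?_)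
    obtain ⟨_, ⟨y, hy, rfl⟩, hlt⟩ := not_bddAbove_iff.1 hbdd ‖y'‖
    exact hA y y' hlt.le hy

variable {n : ℕ}

theorem cube_eq_preimage (a : EuclideanSpace ℝ (Fin n)) (r : ℝ) :
    cube a r = (MeasurableEquiv.toLp 2 (Fin n → ℝ)).symm ⁻¹'
      Set.univ.pi fun i => Set.Icc (a i) (a i + r) := by
  ext y
  simp only [cube, Set.mem_preimage, Set.mem_univ_pi, Set.mem_Icc, Set.mem_ofPred_eq]
  rfl

theorem measurableSet_cube (a : EuclideanSpace ℝ (Fin n)) (r : ℝ) : MeasurableSet (cube a r) := by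
  rw [cube_eq_preimage]
  exact (MeasurableEquiv.measurable _) (.univ_pi fun _ => measurableSet_Icc)

theorem volume_cube (a : EuclideanSpace ℝ (Fin n)) (r : ℝ) :
    volume (cube a r) = ENNReal.ofReal r ^ n := by
  rw [cube_eq_preimage, (EuclideanSpace.volume_preserving_symm_measurableEquiv_toLp
    (Fin n)).measure_preimage (MeasurableSet.univ_pi fun _ => measurableSet_Icc).nullMeasurableSet,
    volume_pi_pi]
  simp [Real.volume_Icc]

-- In dimension 0 every cube is the whole one-point space.
theorem pos_of_pairwise_disjoint_cube {a : ℕ → EuclideanSpace ℝ (Fin n)} {r : ℕ → ℝ}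
    (hdisj : Pairwise (Function.onFun Disjoint fun k => cube (a k) (r k))) : 0 < n := by
  refine Nat.pos_of_ne_zero fun hn0 => ?_
  subst hn0
  exact Set.disjoint_left.1 (hdisj zero_ne_one)
    (show (0 : EuclideanSpace ℝ (Fin 0)) ∈ cube (a 0) (r 0) from fun i => i.elim0) fun i => i.elim0

theorem measurable_maximalFn (h : EuclideanSpace ℝ (Fin n) → ℂ) : Measurable (maximalFn h) := by
  refine LowerSemicontinuous.measurable (lowerSemicontinuous_biSup fun r hr => ?_)
  simp_rw [Measure.addHaar_ball_center volume _ r]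
  exact (ENNReal.continuous_const_mul (ENNReal.inv_ne_top.2 (measure_ball_pos volume 0 hr).ne')
    ).comp_lowerSemicontinuous (lowerSemicontinuous_setLIntegral_ball volume _ r)
    fun _ _ h => mul_le_mul_right h _

theorem setLIntegral_ball_le_maximalFn (h : EuclideanSpace ℝ (Fin n) → ℂ)
    (w : EuclideanSpace ℝ (Fin n)) (R : ℝ) :
    ∫⁻ y in ball w R, ‖h y‖ₑ ≤ volume (ball w R) * maximalFn h w := by
  rcases le_or_gt R 0 with hR | hR
  · simp [ball_eq_empty.2 hR]
  rw [← ENNReal.inv_mul_le_iff (measure_ball_pos volume w hR).ne' measure_ball_lt_top.ne]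
  exact le_iSup₂ (f := fun r (_ : 0 < r) => (volume (ball w r))⁻¹ * ∫⁻ y in ball w r, ‖h y‖ₑ) R hR

theorem setLIntegral_ball_zero_sub_le_maximalFn (h : EuclideanSpace ℝ (Fin n) → ℂ)
    (w : EuclideanSpace ℝ (Fin n)) (R : ℝ) :
    ∫⁻ y in ball 0 R, ‖h (w - y)‖ₑ ≤
      volume (ball (0 : EuclideanSpace ℝ (Fin n)) R) * maximalFn h w := by
  have hpre : (fun y => w - y) ⁻¹' ball w R = ball 0 R := by
    ext y; simp [dist_eq_norm]
  have hreflect := (Measure.measurePreserving_sub_left volume w).setLIntegral_comp_preimage_emb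
    (MeasurableEquiv.subLeft w).measurableEmbedding (fun x => ‖h x‖ₑ) (ball w R)
  rw [hpre] at hreflect
  rw [hreflect, ← Measure.addHaar_ball_center volume w]
  exact setLIntegral_ball_le_maximalFn h w R

theorem setLIntegral_sub_le_volume_mul_maximalFn (hn : 0 < n) (h : EuclideanSpace ℝ (Fin n) → ℂ)
    (w : EuclideanSpace ℝ (Fin n)) {A : Set (EuclideanSpace ℝ (Fin n))}
    (hA : ∀ y y', ‖y'‖ ≤ ‖y‖ → y ∈ A → y' ∈ A) :
    ∫⁻ y in A, ‖h (w - y)‖ₑ ≤ volume A * maximalFn h w := by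
  have : Nontrivial (EuclideanSpace ℝ (Fin n)) := by
    have : Nonempty (Fin n) := ⟨⟨0, hn⟩⟩
    infer_instance
  rcases eq_univ_or_ball_subset_subset_closedBall hA with rfl | ⟨R, hball, hclosedBall⟩
  · calc ∫⁻ y in Set.univ, ‖h (w - y)‖ₑ
        ≤ ∑' k : ℕ, ∫⁻ y in ball 0 k, ‖h (w - y)‖ₑ := by
          rw [← iUnion_ball_nat 0]; exact lintegral_iUnion_le _ _
      _ ≤ ∑' k : ℕ, volume (ball (0 : EuclideanSpace ℝ (Fin n)) k) * maximalFn h w :=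
          ENNReal.tsum_le_tsum fun k => setLIntegral_ball_zero_sub_le_maximalFn h w k
      _ ≤ volume Set.univ * maximalFn h w := by
          rw [ENNReal.tsum_mul_right, measure_univ_of_isAddLeftInvariant]
          exact mul_le_mul_left le_top _
  · calc ∫⁻ y in A, ‖h (w - y)‖ₑ ≤ ∫⁻ y in closedBall 0 R, ‖h (w - y)‖ₑ :=
          lintegral_mono_set hclosedBall
      _ = ∫⁻ y in ball 0 R, ‖h (w - y)‖ₑ := setLIntegral_congr
          (ae_eq_of_subset_of_measure_ge ball_subset_closedBall
            (Measure.addHaar_closedBall_eq_addHaar_ball volume 0 R).le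
            measurableSet_ball.nullMeasurableSet measure_closedBall_lt_top.ne).symm
      _ ≤ volume (ball (0 : EuclideanSpace ℝ (Fin n)) R) * maximalFn h w :=
          setLIntegral_ball_zero_sub_le_maximalFn h w R
      _ ≤ volume A * maximalFn h w := by gcongr

theorem lintegral_radial_mul_le_maximalFn (hn : 0 < n) {h : EuclideanSpace ℝ (Fin n) → ℂ}
    (hh : AEStronglyMeasurable h volume) {φ : EuclideanSpace ℝ (Fin n) → ℝ} (hφ0 : 0 ≤ φ)
    (hφ : AEMeasurable φ volume) (hrad : ∀ y y', ‖y'‖ ≤ ‖y‖ → φ y ≤ φ y')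
    (w : EuclideanSpace ℝ (Fin n)) :
    ∫⁻ y, ENNReal.ofReal (φ y) * ‖h (w - y)‖ₑ ≤ (∫⁻ y, ENNReal.ofReal (φ y)) * maximalFn h w :=
  lintegral_ofReal_mul_le_of_superlevelSets hφ0 hφ
    (hh.enorm.comp_quasiMeasurePreserving (quasiMeasurePreserving_sub_left volume w))
    fun _ => setLIntegral_sub_le_volume_mul_maximalFn hn h w
      fun y y' hle hy => hy.trans_le (hrad y y' hle)

noncomputable def dilate (ρ : EuclideanSpace ℝ (Fin n) → ℝ) (τ : ℝ)
    (y : EuclideanSpace ℝ (Fin n)) : ℝ :=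
  (τ ^ n)⁻¹ * ρ (τ⁻¹ • y)

section Dilate

variable {ρ : EuclideanSpace ℝ (Fin n) → ℝ} {τ : ℝ}

theorem MeasureTheory.Integrable.dilate (hρ : Integrable ρ) (hτ : τ ≠ 0) :
    Integrable (dilate ρ τ) :=
  (hρ.comp_smul (inv_ne_zero hτ)).const_mul _

theorem dilate_nonneg (hρ0 : 0 ≤ ρ) (hτ : 0 < τ) : 0 ≤ dilate ρ τ :=
  fun _ => mul_nonneg (by positivity) (hρ0 _)

theorem integral_dilate (hτ : 0 < τ) : ∫ y, dilate ρ τ y = ∫ y, ρ y := by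
  simp only [dilate]
  rw [integral_const_mul, Measure.integral_comp_inv_smul_of_nonneg volume ρ hτ.le,
    finrank_euclideanSpace_fin, smul_eq_mul, inv_mul_cancel_left₀ (pow_ne_zero n hτ.ne')]

theorem lintegral_ofReal_dilate_le_one (hρ0 : 0 ≤ ρ) (hρ : Integrable ρ) (hρ1 : ∫ y, ρ y ≤ 1)
    (hτ : 0 < τ) : ∫⁻ y, ENNReal.ofReal (dilate ρ τ y) ≤ 1 := by
  rw [← ofReal_integral_eq_lintegral_ofReal (hρ.dilate hτ.ne')
    (ae_of_all _ (dilate_nonneg hρ0 hτ)), integral_dilate hτ]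
  exact ENNReal.ofReal_le_one.2 hρ1

theorem dilate_le_dilate_of_norm_le {ρ₀ : ℝ → ℝ} (hradial : ∀ x, ρ x = ρ₀ ‖x‖)
    (hdecr : ∀ s u : ℝ, 0 ≤ s → s ≤ u → ρ₀ u ≤ ρ₀ s) (hτ : 0 < τ)
    {y y' : EuclideanSpace ℝ (Fin n)} (hle : ‖y'‖ ≤ ‖y‖) : dilate ρ τ y ≤ dilate ρ τ y' := by
  simp only [dilate, hradial, norm_smul, Real.norm_eq_abs, abs_inv, abs_of_pos hτ]
  gcongr
  exact hdecr _ _ (by positivity) (by gcongr)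

theorem lintegral_dilate_mul_le_maximalFn (hn : 0 < n) {h : EuclideanSpace ℝ (Fin n) → ℂ}
    (hh : AEStronglyMeasurable h volume) {ρ₀ : ℝ → ℝ} (hradial : ∀ x, ρ x = ρ₀ ‖x‖)
    (hdecr : ∀ s u : ℝ, 0 ≤ s → s ≤ u → ρ₀ u ≤ ρ₀ s) (hρ0 : 0 ≤ ρ) (hρ : Integrable ρ)
    (hρ1 : ∫ y, ρ y ≤ 1) (hτ : 0 < τ) (w : EuclideanSpace ℝ (Fin n)) :
    ∫⁻ y, ENNReal.ofReal (dilate ρ τ y) * ‖h (w - y)‖ₑ ≤ maximalFn h w :=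
  calc _ ≤ (∫⁻ y, ENNReal.ofReal (dilate ρ τ y)) * maximalFn h w :=
        lintegral_radial_mul_le_maximalFn hn hh (dilate_nonneg hρ0 hτ)
          (hρ.dilate hτ.ne').aemeasurable
          (fun _ _ => dilate_le_dilate_of_norm_le hradial hdecr hτ) w
    _ ≤ maximalFn h w :=
        mul_le_of_le_one_left' (lintegral_ofReal_dilate_le_one hρ0 hρ hρ1 hτ)

end Dilate

theorem stmt14_general {n : ℕ}
    (a : ℕ → EuclideanSpace ℝ (Fin n)) (r : ℕ → ℝ)
    (hdisj : Pairwise (Function.onFun Disjoint (fun k => cube (a k) (r k))))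
    (α : ℝ)
    (c : ℕ → ℝ)
    (hc : ∀ k, c k ≤ α * (volume (cube (a k) (r k))).toReal)
    (μ : Measure (EuclideanSpace ℝ (Fin n))) [IsFiniteMeasure μ]
    (ρ : EuclideanSpace ℝ (Fin n) → ℝ) (ρ₀ : ℝ → ℝ)
    (hradial : ∀ x, ρ x = ρ₀ ‖x‖)
    (hnonneg : ∀ s : ℝ, 0 ≤ s → 0 ≤ ρ₀ s)
    (hdecr : ∀ s u : ℝ, 0 ≤ s → s ≤ u → ρ₀ u ≤ ρ₀ s)
    (hρint : Integrable ρ) (hρ1 : ∫ x, ρ x ≤ 1)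
    (t : ℕ → ℝ) (ht : ∀ k, 0 < t k)
    (h : EuclideanSpace ℝ (Fin n) → ℂ) (hh : MemLp h 2 (volume : Measure (EuclideanSpace ℝ (Fin n)))) :
    ∑' k : ℕ, ENNReal.ofReal (c k) * (volume (cube (a k) (r k)))⁻¹ *
        ∫⁻ z in cube (a k) (r k),
          ∫⁻ y : EuclideanSpace ℝ (Fin n),
            ENNReal.ofReal ((t k ^ n)⁻¹ * ρ ((t k)⁻¹ • y)) *
              ∫⁻ u, ((‖h (z - y - u)‖₊ : ℝ≥0∞)) ∂μ ≤
      ENNReal.ofReal α * μ Set.univ * (∑' k : ℕ, volume (cube (a k) (r k))) ^ (1/2 : ℝ) *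
        (∫⁻ x, (maximalFn h x) ^ 2) ^ (1/2 : ℝ) := by
  have hn := pos_of_pairwise_disjoint_cube hdisj
  set I := fun k => cube (a k) (r k)
  have hρ0 : 0 ≤ ρ := fun x => hradial x ▸ hnonneg _ (norm_nonneg x)
  have hM := measurable_maximalFn h
  have hconv (k : ℕ) (z : EuclideanSpace ℝ (Fin n)) :
      ∫⁻ y, ENNReal.ofReal (dilate ρ (t k) y) * ∫⁻ u, ‖h (z - y - u)‖ₑ ∂μ ≤
        ∫⁻ u, maximalFn h (z - u) ∂μ :=
    lintegral_mul_lintegral_sub_sub_le μ (hρint.dilate (ht k).ne').aemeasurable.ennreal_ofReal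
      hh.1.enorm (lintegral_dilate_mul_le_maximalFn hn hh.1 hradial hdecr hρ0 hρint hρ1 (ht k)) z
  calc _ ≤ ∑' k, ENNReal.ofReal α * ∫⁻ z in I k, ∫⁻ u, maximalFn h (z - u) ∂μ :=
        ENNReal.tsum_le_tsum fun k => mul_le_mul'
          (ofReal_mul_inv_le_of_le_mul_toReal (hc k) (by simp [volume_cube]))
          (lintegral_mono fun z => hconv k z)
    _ = ENNReal.ofReal α * ∫⁻ u, (∫⁻ z in ⋃ k, I k, maximalFn h (z - u)) ∂μ := by
        rw [ENNReal.tsum_mul_left, ← lintegral_iUnion (fun k => measurableSet_cube _ _) hdisj,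
          lintegral_lintegral_swap (f := fun z u => maximalFn h (z - u))
            (hM.comp measurable_sub).aemeasurable]
    _ ≤ ENNReal.ofReal α * ∫⁻ _, volume (⋃ k, I k) ^ (1 / 2 : ℝ) *
          (∫⁻ x, maximalFn h x ^ 2) ^ (1 / 2 : ℝ) ∂μ := by
        gcongr with u
        rw [← lintegral_sub_right_eq_self (fun x => maximalFn h x ^ 2) u]
        exact setLIntegral_le_measure_rpow_mul_lintegral_sq _
          (hM.comp (measurable_sub_const u)).aemeasurable
    _ = _ := by
        rw [lintegral_const, measure_iUnion hdisj fun k => measurableSet_cube _ _]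
        ring

/-- The low-energy duality estimate: for disjoint cubes `I_k`, `c_k ≤ α|I_k|`, a finite
measure `μ`, and nonnegative radially decreasing `ρ` with `‖ρ‖₁ ≤ 1`,
`∑_k c_k |I_k|⁻¹ ∫_{I_k} (ρ_{t_k} * μ * |h|)(z) dz ≤ α μ(ℝⁿ) (∑_k |I_k|)^{1/2} ‖Mh‖₂`. -/
theorem stmt14 {n : ℕ}
    (a : ℕ → EuclideanSpace ℝ (Fin n)) (r : ℕ → ℝ) (hr : ∀ k, 0 < r k)
    (hdisj : Pairwise (Function.onFun Disjoint (fun k => cube (a k) (r k))))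
    (α : ℝ) (hα : 0 < α)
    (c : ℕ → ℝ) (hc0 : ∀ k, 0 ≤ c k)
    (hc : ∀ k, c k ≤ α * (volume (cube (a k) (r k))).toReal)
    (μ : Measure (EuclideanSpace ℝ (Fin n))) [IsFiniteMeasure μ]
    (ρ : EuclideanSpace ℝ (Fin n) → ℝ) (ρ₀ : ℝ → ℝ)
    (hradial : ∀ x, ρ x = ρ₀ ‖x‖)
    (hnonneg : ∀ s : ℝ, 0 ≤ s → 0 ≤ ρ₀ s)
    (hdecr : ∀ s u : ℝ, 0 ≤ s → s ≤ u → ρ₀ u ≤ ρ₀ s)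
    (hρint : Integrable ρ) (hρ1 : ∫ x, ρ x ≤ 1)
    (t : ℕ → ℝ) (ht : ∀ k, 0 < t k)
    (h : EuclideanSpace ℝ (Fin n) → ℂ) (hh : MemLp h 2 (volume : Measure (EuclideanSpace ℝ (Fin n)))) :
    ∑' k : ℕ, ENNReal.ofReal (c k) * (volume (cube (a k) (r k)))⁻¹ *
        ∫⁻ z in cube (a k) (r k),
          ∫⁻ y : EuclideanSpace ℝ (Fin n),
            ENNReal.ofReal ((t k ^ n)⁻¹ * ρ ((t k)⁻¹ • y)) *
              ∫⁻ u, ((‖h (z - y - u)‖₊ : ℝ≥0∞)) ∂μ ≤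
      ENNReal.ofReal α * μ Set.univ * (∑' k : ℕ, volume (cube (a k) (r k))) ^ (1/2 : ℝ) *
        (∫⁻ x, (maximalFn h x) ^ 2) ^ (1/2 : ℝ) :=
  stmt14_general a r hdisj α c hc μ ρ ρ₀ hradial hnonneg hdecr hρint hρ1 t ht h hh
end
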